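/- (Corollary: atomic characterization of support) For every base B and every IPL formula φ: ⊩_B φ holds if and only if for every base X ⊇ B and every atom p, if φ ⊩_X p then ⊩_X p. -/
import Mathlib


/-- Formulas of intuitionistic propositional logic over a denumerable
set of atoms (here: `ℕ`). -/
inductive IPLForm : Type where
  | atom : ℕ → IPLForm
  | and : IPLForm → IPLForm → IPLForm
  | or : IPLForm → IPLForm → IPLForm
  | imp : IPLForm → IPLForm → IPLForm
  | bot : IPLForm
deriving DecidableEq

/-- A (second-level) atomic rule `(Q₁ ▷ q₁, …, Qₙ ▷ qₙ) ⇒ q`;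
an axiom `⇒ q` is the case `prems = []`. -/
structure IPLRule : Type where
  prems : List (Finset ℕ × ℕ)
  concl : ℕ

/-- A base is a set of atomic rules. -/
abbrev IPLBase := Set IPLRule

/-- Derivability in a base `B`: `S ⊢_B q`. -/
inductive IPLDer (B : IPLBase) : Finset ℕ → ℕ → Prop where
  | ref {S : Finset ℕ} {q : ℕ} : q ∈ S → IPLDer B S q
  | app {S : Finset ℕ} {r : IPLRule} :
      r ∈ B → (∀ pr ∈ r.prems, IPLDer B (S ∪ pr.1) pr.2) →
      IPLDer B S r.concl

/-- Sandqvist's support relation `⊩_B φ`. -/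
def Supp : IPLForm → IPLBase → Prop
  | .atom p, B => IPLDer B ∅ p
  | .and φ ψ, B => Supp φ B ∧ Supp ψ B
  | .or φ ψ, B => ∀ C : IPLBase, B ⊆ C → ∀ p : ℕ,
      (∀ D : IPLBase, C ⊆ D → Supp φ D → IPLDer D ∅ p) →
      (∀ D : IPLBase, C ⊆ D → Supp ψ D → IPLDer D ∅ p) →
      IPLDer C ∅ p
  | .imp φ ψ, B => ∀ C : IPLBase, B ⊆ C → Supp φ C → Supp ψ C
  | .bot, B => ∀ p : ℕ, IPLDer B ∅ p

/-- Support of a formula relative to a context (finite set of formulas):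
`Γ ⊩_B φ`. -/
def SuppCtx (Γ : Finset IPLForm) (B : IPLBase) (φ : IPLForm) : Prop :=
  ∀ C : IPLBase, B ⊆ C → (∀ ψ ∈ Γ, Supp ψ C) → Supp φ C

/-- The modified support relation `⊩*_B φ`, in which the clause for `∧`
takes the form of the generalized elimination rule. -/
def Supp' : IPLForm → IPLBase → Prop
  | .atom p, B => IPLDer B ∅ p
  | .and φ ψ, B => ∀ C : IPLBase, B ⊆ C → ∀ p : ℕ,
      (∀ D : IPLBase, C ⊆ D → Supp' φ D → Supp' ψ D → IPLDer D ∅ p) →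
      IPLDer C ∅ p
  | .or φ ψ, B => ∀ C : IPLBase, B ⊆ C → ∀ p : ℕ,
      (∀ D : IPLBase, C ⊆ D → Supp' φ D → IPLDer D ∅ p) →
      (∀ D : IPLBase, C ⊆ D → Supp' ψ D → IPLDer D ∅ p) →
      IPLDer C ∅ p
  | .imp φ ψ, B => ∀ C : IPLBase, B ⊆ C → Supp' φ C → Supp' ψ C
  | .bot, B => ∀ p : ℕ, IPLDer B ∅ p

/-- Support relative to a context for the modified semantics: `Γ ⊩*_B φ`. -/
def SuppCtx' (Γ : Finset IPLForm) (B : IPLBase) (φ : IPLForm) : Prop :=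
  ∀ C : IPLBase, B ⊆ C → (∀ ψ ∈ Γ, Supp' ψ C) → Supp' φ C

/-- Gentzen's natural deduction system NJ for IPL, with finite sets as
contexts: `Γ ⊢ φ`. -/
inductive NJ : Finset IPLForm → IPLForm → Prop where
  | ax {Γ : Finset IPLForm} {φ : IPLForm} : φ ∈ Γ → NJ Γ φ
  | andI {Γ φ ψ} : NJ Γ φ → NJ Γ ψ → NJ Γ (.and φ ψ)
  | andE1 {Γ φ ψ} : NJ Γ (.and φ ψ) → NJ Γ φ
  | andE2 {Γ φ ψ} : NJ Γ (.and φ ψ) → NJ Γ ψ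
  | orI1 {Γ φ ψ} : NJ Γ φ → NJ Γ (.or φ ψ)
  | orI2 {Γ φ ψ} : NJ Γ ψ → NJ Γ (.or φ ψ)
  | orE {Γ φ ψ χ} : NJ Γ (.or φ ψ) → NJ (insert φ Γ) χ → NJ (insert ψ Γ) χ → NJ Γ χ
  | impI {Γ φ ψ} : NJ (insert φ Γ) ψ → NJ Γ (.imp φ ψ)
  | impE {Γ φ ψ} : NJ Γ (.imp φ ψ) → NJ Γ φ → NJ Γ ψ
  | botE {Γ φ} : NJ Γ .bot → NJ Γ φ

lemma IPLDer.mono {B C : IPLBase} (h : B ⊆ C) {S : Finset ℕ} {q : ℕ}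
    (d : IPLDer B S q) : IPLDer C S q := by
  induction d with
  | ref hq => exact .ref hq
  | app hr _ ih => exact .app (h hr) ih

lemma supp_mono (φ : IPLForm) {B C : IPLBase} (h : B ⊆ C) (hs : Supp φ B) :
    Supp φ C := by
  induction φ generalizing B C with
  | atom p => exact IPLDer.mono h hs
  | and φ ψ ihφ ihψ => exact ⟨ihφ h hs.1, ihψ h hs.2⟩
  | or φ ψ _ _ => exact fun D hD => hs D (h.trans hD)
  | imp φ ψ _ _ => exact fun D hD => hs D (h.trans hD)
  | bot => exact fun p => IPLDer.mono h (hs p)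

lemma atomic_char_rev (φ : IPLForm) : ∀ B : IPLBase,
    (∀ X : IPLBase, B ⊆ X → ∀ p : ℕ,
      SuppCtx {φ} X (.atom p) → Supp (.atom p) X) →
    Supp φ B := by
  induction φ with
  | atom q =>
    intro B H
    exact H B (fun _ a => a) q
      (fun C hC h => h (.atom q) (Finset.mem_singleton_self _))
  | and φ ψ ihφ ihψ =>
    intro B H
    constructor
    · apply ihφ B
      intro X hX p hctx
      refine H X hX p (fun C hC h => hctx C hC ?_)
      intro χ hχ
      rw [Finset.mem_singleton.mp hχ]
      exact (h (.and φ ψ) (Finset.mem_singleton_self _)).1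
    · apply ihψ B
      intro X hX p hctx
      refine H X hX p (fun C hC h => hctx C hC ?_)
      intro χ hχ
      rw [Finset.mem_singleton.mp hχ]
      exact (h (.and φ ψ) (Finset.mem_singleton_self _)).2
  | or φ ψ _ _ =>
    intro B H
    intro C hC p hφ hψ
    refine H C hC p (fun D hD h => ?_)
    exact (h (.or φ ψ) (Finset.mem_singleton_self _)) D (fun _ a => a) p
      (fun E hE hφE => hφ E (hD.trans hE) hφE)
      (fun E hE hψE => hψ E (hD.trans hE) hψE)
  | imp φ ψ _ ihψ =>
    intro B H
    intro C hC hφC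
    apply ihψ C
    intro X hX p hctxψ
    refine H X (hC.trans hX) p (fun D hD h => ?_)
    refine hctxψ D hD ?_
    intro χ hχ
    rw [Finset.mem_singleton.mp hχ]
    exact (h (.imp φ ψ) (Finset.mem_singleton_self _)) D (fun _ a => a)
      (supp_mono φ ((hX.trans hD)) hφC)
  | bot =>
    intro B H
    intro p
    exact H B (fun _ a => a) p
      (fun C hC h => (h .bot (Finset.mem_singleton_self _)) p)

/-- (Atomic characterization of support) `⊩_B φ` iff for every base
`X ⊇ B` and every atom `p`, if `φ ⊩_X p` then `⊩_X p`. -/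
theorem ipl_atomic_characterization (B : IPLBase) (φ : IPLForm) :
    Supp φ B ↔
      ∀ X : IPLBase, B ⊆ X → ∀ p : ℕ,
        SuppCtx {φ} X (.atom p) → Supp (.atom p) X := by
  constructor
  · intro hs X hX p hctx
    exact hctx X (fun _ a => a) (by
      intro χ hχ
      rw [Finset.mem_singleton.mp hχ]
      exact supp_mono φ hX hs)
  · exact atomic_char_rev φ B
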